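/- arXiv:1704.03777 — 5 statements merged into one kernel-verified Lean document; each statement's English description precedes it below -/
import Mathlib

section
/- The function φ(x) = 1 + 2(x+1)(1+1/x)^x is strictly increasing on the positive reals. -/
open Real

noncomputable def phi (x : ℝ) : ℝ := 1 + 2 * (x + 1) * (1 + 1 / x) ^ x

/-! `(x + 1) (1 + 1/x)^x = exp ((x + 1) log (x + 1) - x log x)`, and this exponent,
`negMulLog x - negMulLog (x + 1)`, has derivative `log (x + 1) - log x > 0`. -/

open Set

lemma hasDerivAt_negMulLog_sub_negMulLog_add_one {x : ℝ} (hx : 0 < x) :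
    HasDerivAt (fun y ↦ negMulLog y - negMulLog (y + 1)) (log (x + 1) - log x) x :=
  ((hasDerivAt_negMulLog hx.ne').sub
    ((hasDerivAt_negMulLog (by positivity : x + 1 ≠ 0)).comp_add_const x 1)).congr_deriv (by ring)

lemma strictMonoOn_negMulLog_sub_negMulLog_add_one :
    StrictMonoOn (fun x ↦ negMulLog x - negMulLog (x + 1)) (Ici 0) := by
  refine strictMonoOn_of_deriv_pos (convex_Ici 0) (by fun_prop) fun x hx ↦ ?_
  rw [interior_Ici] at hx
  rw [(hasDerivAt_negMulLog_sub_negMulLog_add_one hx).deriv]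
  exact sub_pos.2 (log_lt_log hx (lt_add_one x))

lemma phi_eq_one_add_two_mul_exp {x : ℝ} (hx : 0 < x) :
    phi x = 1 + 2 * exp (negMulLog x - negMulLog (x + 1)) := by
  have hx₁ : 0 < x + 1 := by positivity
  have hbase : 1 + 1 / x = (x + 1) / x := by field_simp
  have hexp : negMulLog x - negMulLog (x + 1) = log (x + 1) + log ((x + 1) / x) * x := by
    rw [log_div hx₁.ne' hx.ne']
    simp only [negMulLog]
    ring
  rw [phi, hexp, exp_add, exp_log hx₁, hbase, rpow_def_of_pos (by positivity)]
  ring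

theorem phi_strictMonoOn : StrictMonoOn phi (Set.Ioi (0 : ℝ)) := by
  intro a ha b hb hab
  rw [phi_eq_one_add_two_mul_exp ha, phi_eq_one_add_two_mul_exp hb]
  gcongr 1 + 2 * exp ?_
  exact strictMonoOn_negMulLog_sub_negMulLog_add_one (Ioi_subset_Ici_self ha)
    (Ioi_subset_Ici_self hb) hab
end

section
/- The function h(x) = (x+1)(1+1/x)^x satisfies h''(x) < 0 for all x ≥ 3; i.e., h is strictly concave on [3, ∞). -/
open Real

noncomputable def h (x : ℝ) : ℝ := (x + 1) * (1 + 1 / x) ^ x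

/-!
On `(0, ∞)` we have `h = exp g` with `g x = (x + 1) log (x + 1) - x log x`, so
`h' = h ℓ` and `h'' = h (ℓ ^ 2 + ℓ')` where `ℓ x = log (x + 1) - log x` and
`ℓ' x = -1 / (x (x + 1))`. Writing `a = (x + 1) / x`, the inequality `ℓ ^ 2 < 1 / (x (x + 1))`
becomes `(log a) ^ 2 < a + a⁻¹ - 2 = 4 sinh² (log a / 2)`, i.e. `t < sinh t` for `t > 0`.
Hence `h'' < 0` on all of `(0, ∞)`.
-/

open Set Filter

namespace Real

lemma sq_log_lt_add_inv_sub_two {a : ℝ} (ha : 1 < a) : log a ^ 2 < a + a⁻¹ - 2 := by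
  have ha0 : 0 < a := one_pos.trans ha
  have ht : 0 < log a / 2 := half_pos (log_pos ha)
  have hsinh : log a / 2 < sinh (log a / 2) := self_lt_sinh_iff.2 ht
  calc log a ^ 2 = 4 * (log a / 2) ^ 2 := by ring
    _ < 4 * sinh (log a / 2) ^ 2 := by gcongr
    _ = 2 * cosh (2 * (log a / 2)) - 2 := by rw [cosh_two_mul, cosh_sq]; ring
    _ = a + a⁻¹ - 2 := by rw [mul_div_cancel₀ _ two_ne_zero, cosh_log ha0]; ring

end Real

lemma sq_log_succ_sub_log_lt {x : ℝ} (hx : 0 < x) :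
    (log (x + 1) - log x) ^ 2 < (x * (x + 1))⁻¹ := by
  have hlt : 1 < (x + 1) / x := (one_lt_div hx).2 (lt_add_one x)
  calc (log (x + 1) - log x) ^ 2 = log ((x + 1) / x) ^ 2 := by
        rw [log_div (by positivity) hx.ne']
    _ < (x + 1) / x + ((x + 1) / x)⁻¹ - 2 := sq_log_lt_add_inv_sub_two hlt
    _ = (x * (x + 1))⁻¹ := by field_simp; ring

lemma h_eq_exp {x : ℝ} (hx : 0 < x) : h x = exp ((x + 1) * log (x + 1) - x * log x) := by
  have hx1 : 0 < x + 1 := by positivity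
  have hbase : 1 + 1 / x = (x + 1) / x := by field_simp
  rw [h, hbase, rpow_def_of_pos (by positivity), log_div hx1.ne' hx.ne']
  nth_rw 1 [← exp_log hx1]
  rw [← exp_add]
  ring_nf

lemma hasDerivAt_h {x : ℝ} (hx : 0 < x) : HasDerivAt h (h x * (log (x + 1) - log x)) x := by
  have hshift : HasDerivAt (fun y ↦ (y + 1) * log (y + 1)) (log (x + 1) + 1) x :=
    (hasDerivAt_mul_log (by positivity)).comp_add_const x 1
  have hexponent : HasDerivAt (fun y ↦ (y + 1) * log (y + 1) - y * log y)
      (log (x + 1) - log x) x :=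
    (hshift.sub (hasDerivAt_mul_log hx.ne')).congr_deriv (by ring)
  rw [h_eq_exp hx]
  exact hexponent.exp.congr_of_eventuallyEq <| (eventually_gt_nhds hx).mono fun y hy ↦ h_eq_exp hy

lemma hasDerivAt_deriv_h {x : ℝ} (hx : 0 < x) :
    HasDerivAt (deriv h) (h x * ((log (x + 1) - log x) ^ 2 - (x * (x + 1))⁻¹)) x := by
  have hlog : HasDerivAt (fun y ↦ log (y + 1) - log y) ((x + 1)⁻¹ - x⁻¹) x :=
    ((hasDerivAt_log (by positivity)).comp_add_const x 1).sub (hasDerivAt_log hx.ne')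
  refine (((hasDerivAt_h hx).mul hlog).congr_of_eventuallyEq
    ((eventually_gt_nhds hx).mono fun y hy ↦ (hasDerivAt_h hy).deriv)).congr_deriv ?_
  field_simp
  ring

lemma h_pos {x : ℝ} (hx : 0 < x) : 0 < h x := by
  rw [h_eq_exp hx]; exact exp_pos _

theorem strictConcaveOn_h_Ioi : StrictConcaveOn ℝ (Ioi 0) h := by
  refine strictConcaveOn_of_deriv2_neg (convex_Ioi 0)
    (fun x hx ↦ (hasDerivAt_h hx).continuousAt.continuousWithinAt) fun x hx ↦ ?_
  rw [interior_Ioi] at hx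
  rw [Function.iterate_succ_apply, Function.iterate_one, (hasDerivAt_deriv_h hx).deriv]
  exact mul_neg_of_pos_of_neg (h_pos hx) (sub_neg.2 (sq_log_succ_sub_log_lt hx))

theorem h_strictConcaveOn : StrictConcaveOn ℝ (Set.Ici (3 : ℝ)) h :=
  strictConcaveOn_h_Ioi.subset (Ici_subset_Ioi.2 (by norm_num)) (convex_Ici 3)
end

section
/- For all real x ≥ 3, x(x+1)·(ln(1+1/x))² < 1. -/
/-! With `u = √(1 + 1/x)`, the bound `x (x + 1) log² (1 + 1/x) < 1` is the square of
`2 log u < u - u⁻¹`, i.e. of `t < sinh t` at `t = log u > 0`. -/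

open Real

theorem Real.two_mul_log_lt_sub_inv {u : ℝ} (hu : 1 < u) : 2 * log u < u - u⁻¹ := by
  have h := self_lt_sinh_iff.mpr (log_pos hu)
  rw [sinh_log (by linarith)] at h
  linarith

theorem Real.log_sq_lt_sub_one_sq_div {y : ℝ} (hy : 1 < y) : log y ^ 2 < (y - 1) ^ 2 / y := by
  have hy0 : 0 < y := by linarith
  have hu : 1 < √y := by rwa [lt_sqrt zero_le_one, one_pow]
  have hlog : log y = 2 * log √y := by rw [log_sqrt hy0.le]; ring
  have hsq : (√y - (√y)⁻¹) ^ 2 = (y - 1) ^ 2 / y := by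
    have hu0 : √y ≠ 0 := by positivity
    field_simp
    rw [sq_sqrt hy0.le]
    ring
  rw [← hsq, hlog]
  exact pow_lt_pow_left₀ (two_mul_log_lt_sub_inv hu) (by linarith [log_pos hu]) two_ne_zero

theorem key_ineq (x : ℝ) (hx : 3 ≤ x) :
    x * (x + 1) * (Real.log (1 + 1 / x)) ^ 2 < 1 := by
  have hx0 : 0 < x := by linarith
  have hy : 1 < 1 + 1 / x := by simp [hx0]
  have hbound : (1 + 1 / x - 1) ^ 2 / (1 + 1 / x) = 1 / (x * (x + 1)) := by
    field_simp
    ring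
  have hlog := log_sq_lt_sub_one_sq_div hy
  rw [hbound, lt_div_iff₀ (by positivity)] at hlog
  linarith
end

section
/- For every natural number q ≥ 1 and every real ℓ with 1 ≤ ℓ ≤ q+1, setting b_q = 1 + 1/q and b_{q+1} = 1 + 1/(q+1), one has b_{q+1}^{-ℓ-1} · ( b_q^ℓ/(b_q - 1) + 1 + b_{q+1} ) · (b_{q+1} - 1) ≤ 1. -/
/-!
Write `a = b_q` and `b = b_{q+1}`. Since `(q + 1) b = q + 2`, the claim is
`q a^ℓ + 1 + b ≤ (q + 2) b^ℓ`. Divided by `b^ℓ`, the left side `q (a/b)^ℓ + (1 + b) b^(-ℓ)` is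
convex in `ℓ`, so it suffices to check `ℓ = 1`, where equality holds, and `ℓ = q + 1`.
There the claim compares `e_q = (1 + 1/q)^q` with `e_{q+1}`: Bernoulli's inequality applied to
`b / a = 1 - 1/(q+1)^2` gives `e_{q+1} ≥ e_q (1 + 1/(q+1)^3)`, and the binomial bound
`e_q ≥ 2 + (q-1)/(2q)` makes up for the remaining `2 + 1/(q+1)`.
-/

open Real Set

theorem one_add_mul_add_choose_two_mul_sq_le_pow {K : Type*} [Field K] [LinearOrder K]
    [IsStrictOrderedRing K] {x : K} (hx : 0 ≤ x) :
    ∀ n : ℕ, 1 + n * x + n.choose 2 * x ^ 2 ≤ (1 + x) ^ n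
  | 0 => by simp
  | n + 1 => by
    have ih := one_add_mul_add_choose_two_mul_sq_le_pow hx n
    calc 1 + ((n + 1 : ℕ) : K) * x + ((n + 1).choose 2 : ℕ) * x ^ 2
        ≤ (1 + n * x + n.choose 2 * x ^ 2) * (1 + x) := by
          rw [Nat.choose_succ_succ', Nat.choose_one_right]
          push_cast
          nlinarith [pow_nonneg hx 3, (Nat.cast_nonneg (n.choose 2) : (0 : K) ≤ _)]
      _ ≤ (1 + x) ^ n * (1 + x) := by gcongr
      _ = (1 + x) ^ (n + 1) := (pow_succ _ _).symm

theorem two_add_div_le_one_add_one_div_pow {n : ℕ} (hn : n ≠ 0) :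
    2 + ((n : ℝ) - 1) / (2 * n) ≤ (1 + 1 / (n : ℝ)) ^ n := by
  have hn' : (n : ℝ) ≠ 0 := Nat.cast_ne_zero.2 hn
  refine le_of_eq_of_le ?_ (one_add_mul_add_choose_two_mul_sq_le_pow (x := 1 / (n : ℝ))
    (by positivity) n)
  rw [Nat.cast_choose_two]
  field_simp
  ring

theorem one_add_one_div_pow_mul_le_succ (n : ℕ) :
    (1 + 1 / (n : ℝ)) ^ n * (1 + 1 / ((n : ℝ) + 1) ^ 3) ≤ (1 + 1 / ((n : ℝ) + 1)) ^ (n + 1) := by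
  rcases Nat.eq_zero_or_pos n with rfl | hn
  · norm_num
  have hN : (0 : ℝ) < n := Nat.cast_pos.2 hn
  have hbern : 1 - n / ((n : ℝ) + 1) ^ 2 ≤ (1 - 1 / ((n : ℝ) + 1) ^ 2) ^ n := by
    have hsmall : 1 / ((n : ℝ) + 1) ^ 2 ≤ 1 := by rw [div_le_one (by positivity)]; nlinarith
    calc 1 - n / ((n : ℝ) + 1) ^ 2 = 1 + n * -(1 / ((n : ℝ) + 1) ^ 2) := by ring
      _ ≤ (1 + -(1 / ((n : ℝ) + 1) ^ 2)) ^ n := one_add_mul_le_pow (by linarith) n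
      _ = _ := by ring
  have hfac : (1 + 1 / ((n : ℝ) + 1)) ^ (n + 1)
      = (1 + 1 / (n : ℝ)) ^ n * ((1 - 1 / ((n : ℝ) + 1) ^ 2) ^ n * (1 + 1 / ((n : ℝ) + 1))) := by
    rw [← mul_assoc, ← mul_pow, pow_succ]
    congr 2
    field_simp
    ring
  rw [hfac]
  gcongr ?_ * ?_
  calc 1 + 1 / ((n : ℝ) + 1) ^ 3 = (1 - n / ((n : ℝ) + 1) ^ 2) * (1 + 1 / ((n : ℝ) + 1)) := by
        field_simp; ring
    _ ≤ _ := mul_le_mul_of_nonneg_right hbern (by positivity)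

theorem mul_one_add_one_div_pow_add_le {n : ℕ} (hn : 1 ≤ n) :
    (n : ℝ) * (1 + 1 / (n : ℝ)) ^ (n + 1) + (1 + (1 + 1 / ((n : ℝ) + 1)))
      ≤ ((n : ℝ) + 2) * (1 + 1 / ((n : ℝ) + 1)) ^ (n + 1) := by
  have hN : (1 : ℝ) ≤ n := Nat.one_le_cast.2 hn
  have hlow := two_add_div_le_one_add_one_div_pow (n := n) (by omega)
  have hratio := one_add_one_div_pow_mul_le_succ n
  have hsucc : (n : ℝ) * (1 + 1 / (n : ℝ)) ^ (n + 1) = (n + 1) * (1 + 1 / (n : ℝ)) ^ n := by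
    rw [pow_succ]; field_simp
  have hpoly : 2 + 1 / ((n : ℝ) + 1)
      ≤ (2 + ((n : ℝ) - 1) / (2 * n)) * (1 + (n + 2) / ((n : ℝ) + 1) ^ 3) := by
    field_simp
    nlinarith [pow_nonneg (zero_le_one.trans hN) 4]
  rw [hsucc]
  calc (n + 1) * (1 + 1 / (n : ℝ)) ^ n + (1 + (1 + 1 / ((n : ℝ) + 1)))
      = (n + 1) * (1 + 1 / (n : ℝ)) ^ n + (2 + 1 / ((n : ℝ) + 1)) := by ring
    _ ≤ (n + 1) * (1 + 1 / (n : ℝ)) ^ n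
          + (1 + 1 / (n : ℝ)) ^ n * (1 + (n + 2) / ((n : ℝ) + 1) ^ 3) := by
        gcongr
        exact hpoly.trans (mul_le_mul_of_nonneg_right hlow (by positivity))
    _ = ((n : ℝ) + 2) * ((1 + 1 / (n : ℝ)) ^ n * (1 + 1 / ((n : ℝ) + 1) ^ 3)) := by ring
    _ ≤ ((n : ℝ) + 2) * (1 + 1 / ((n : ℝ) + 1)) ^ (n + 1) :=
        mul_le_mul_of_nonneg_left hratio (by positivity)

theorem mul_rpow_add_le_mul_rpow_of_mem_Icc {a b c d e x y z : ℝ} (ha : 0 < a) (hb : 0 < b)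
    (hc : 0 ≤ c) (hd : 0 ≤ d) (hx : c * a ^ x + d ≤ e * b ^ x) (hy : c * a ^ y + d ≤ e * b ^ y)
    (hz : z ∈ Icc x y) : c * a ^ z + d ≤ e * b ^ z := by
  set F : ℝ → ℝ := fun t ↦ c * (a / b) ^ t + d * b⁻¹ ^ t
  have hF : ∀ t, c * a ^ t + d ≤ e * b ^ t ↔ F t ≤ e := fun t ↦ by
    have hFt : F t * b ^ t = c * a ^ t + d := by
      simp only [F, div_rpow ha.le hb.le, inv_rpow hb.le]
      field_simp
    rw [← hFt, mul_le_mul_iff_of_pos_right (rpow_pos_of_pos hb t)]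
  have hconv : ConvexOn ℝ univ F :=
    ((convexOn_rpow_left (div_pos ha hb)).smul hc).add
      ((convexOn_rpow_left (inv_pos.2 hb)).smul hd)
  rw [hF] at hx hy ⊢
  rw [← segment_eq_Icc (hz.1.trans hz.2)] at hz
  exact (hconv.le_on_segment trivial trivial hz).trans (max_le hx hy)

theorem mul_one_add_one_div_rpow_add_le {q : ℕ} (hq : 1 ≤ q) {ℓ : ℝ}
    (hℓ : ℓ ∈ Icc 1 ((q : ℝ) + 1)) :
    (q : ℝ) * (1 + 1 / (q : ℝ)) ^ ℓ + (1 + (1 + 1 / ((q : ℝ) + 1)))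
      ≤ ((q : ℝ) + 2) * (1 + 1 / ((q : ℝ) + 1)) ^ ℓ := by
  have hQ : (0 : ℝ) < q := Nat.cast_pos.2 hq
  refine mul_rpow_add_le_mul_rpow_of_mem_Icc (by positivity) (by positivity) hQ.le
    (by positivity) (le_of_eq ?_) ?_ hℓ
  · rw [rpow_one, rpow_one]
    field_simp
    ring
  · exact_mod_cast mul_one_add_one_div_pow_add_le hq

theorem h_ql_le_one (q : ℕ) (hq : 1 ≤ q) (ℓ : ℝ) (hℓ1 : 1 ≤ ℓ) (hℓ2 : ℓ ≤ (q : ℝ) + 1) :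
    (1 + 1 / ((q : ℝ) + 1)) ^ (-ℓ - 1) *
      ((1 + 1 / (q : ℝ)) ^ ℓ / ((1 + 1 / (q : ℝ)) - 1) + 1 + (1 + 1 / ((q : ℝ) + 1))) *
      ((1 + 1 / ((q : ℝ) + 1)) - 1) ≤ 1 := by
  have key := mul_one_add_one_div_rpow_add_le hq ⟨hℓ1, hℓ2⟩
  have hb : (0 : ℝ) < 1 + 1 / ((q : ℝ) + 1) := by positivity
  rw [show -ℓ - 1 = -(ℓ + 1) by ring, rpow_neg hb.le, rpow_add hb, rpow_one]
  have hB := rpow_pos_of_pos hb ℓ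
  generalize (1 + 1 / (q : ℝ)) ^ ℓ = A at key ⊢
  generalize (1 + 1 / ((q : ℝ) + 1)) ^ ℓ = B at key hB ⊢
  have hQ : (0 : ℝ) < q := Nat.cast_pos.2 hq
  field_simp at key ⊢
  linarith
end

section
/- For every natural number q ≥ 1, with b_q = 1+1/q and b_{q+1} = 1 + 1/(q+1), one has h_{q,q+1} ≤ 1, i.e., b_{q+1}^{-q-2} · ( b_q^{q+1}/(b_q-1) + 1 + b_{q+1} ) · (b_{q+1}-1) ≤ 1. -/
lemma binom2 (n : ℕ) (t : ℝ) (ht : 0 ≤ t) :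
    1 + n * t + (n * (n - 1)) / 2 * t ^ 2 ≤ (1 + t) ^ n := by
  induction n with
  | zero => norm_num
  | succ m ih =>
    have h2 : (1 + (m:ℝ) * t + ((m:ℝ) * ((m:ℝ) - 1)) / 2 * t ^ 2) * (1 + t)
        ≤ (1 + t) ^ m * (1 + t) :=
      mul_le_mul_of_nonneg_right ih (by linarith)
    have h3 : (1 + t) ^ (m + 1) = (1 + t) ^ m * (1 + t) := pow_succ _ _
    have h4 : 0 ≤ (m:ℝ) * ((m:ℝ) - 1) := by
      rcases Nat.eq_zero_or_pos m with h | h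
      · simp [h]
      · have : (1:ℝ) ≤ (m:ℝ) := by exact_mod_cast h
        nlinarith
    have h5 : 0 ≤ (m:ℝ) * ((m:ℝ) - 1) * (t * t * t) :=
      mul_nonneg h4 (mul_nonneg (mul_nonneg ht ht) ht)
    push_cast
    nlinarith [h2, h3, h5]

theorem h_q_endpoint_le_one (q : ℕ) (hq : 1 ≤ q) :
    (1 + 1 / ((q : ℝ) + 1)) ^ (-(q : ℝ) - 2) *
      ((1 + 1 / (q : ℝ)) ^ ((q : ℝ) + 1) / ((1 + 1 / (q : ℝ)) - 1) + 1 + (1 + 1 / ((q : ℝ) + 1))) *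
      ((1 + 1 / ((q : ℝ) + 1)) - 1) ≤ 1 := by
  have hx1 : (1:ℝ) ≤ (q:ℝ) := by exact_mod_cast hq
  set x : ℝ := (q:ℝ) with hxdef
  have hx0 : 0 < x := by linarith
  have ha0 : (0:ℝ) < 1 + 1/x := by positivity
  have hb0 : (0:ℝ) < 1 + 1/(x+1) := by positivity
  -- convert rpow to nat pow
  have e1 : (-(q:ℝ) - 2) = -(((q+2:ℕ)):ℝ) := by push_cast; ring
  have e2 : ((q:ℝ) + 1) = ((q+1:ℕ):ℝ) := by push_cast; ring
  have hb0' : (0:ℝ) < 1 + 1/(((q+1:ℕ)):ℝ) := by positivity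
  rw [e1, e2, Real.rpow_neg hb0'.le, Real.rpow_natCast, Real.rpow_natCast]
  push_cast
  -- key inequality
  have key : x * (1 + 1/x) ^ (q+1) + 1 + (1 + 1/(x+1)) ≤ (x+1) * (1 + 1/(x+1)) ^ (q+2) := by
    by_cases hq3 : 3 ≤ q
    · have hx3 : (3:ℝ) ≤ x := by rw [hxdef]; exact_mod_cast hq3
      set a : ℝ := 1 + 1/x with hadef
      set b : ℝ := 1 + 1/(x+1) with hbdef
      have hA : (0:ℝ) < a ^ (q+1) := by positivity
      have hB1 : (0:ℝ) < b ^ (q+1) := by positivity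
      -- Bernoulli: x/(x+1) ≤ (b/a)^(q+1)
      have hber := one_add_mul_le_pow
        (show (-2:ℝ) ≤ -(1/(x+1)^2) by
          have : (0:ℝ) < (x+1)^2 := by positivity
          rw [neg_le, neg_neg]
          rw [div_le_iff₀ this]
          nlinarith) (q+1)
      have ebase : (1:ℝ) + -(1/(x+1)^2) = b/a := by
        rw [hadef, hbdef]; field_simp; ring
      have elhs : (1:ℝ) + ((q+1:ℕ):ℝ) * (-(1/(x+1)^2)) = x/(x+1) := by
        push_cast
        rw [← hxdef]
        field_simp
        ring
      rw [elhs, ebase, div_pow] at hber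
      have hL1 : x * a ^ (q+1) ≤ (x+1) * b ^ (q+1) := by
        rw [div_le_div_iff₀ (by linarith) hA] at hber
        nlinarith [hber]
      -- second-order bound : b + 1 ≤ a ^ q
      have hbin := binom2 q (1/x) (by positivity)
      have hL2 : b + 1 ≤ a ^ q := by
        rw [hbdef]
        have e1 : (q:ℝ) * (1/x) = 1 := by rw [← hxdef]; field_simp
        have e2 : ((q:ℝ) * ((q:ℝ) - 1)) / 2 * (1/x)^2 = (x-1)/(2*x) := by
          rw [← hxdef]; field_simp
        rw [e1, e2, ← hadef] at hbin
        have : 1/(x+1) ≤ (x-1)/(2*x) := by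
          rw [div_le_div_iff₀ (by linarith) (by linarith)]
          nlinarith
        linarith
      -- assemble
      have hps : b ^ (q+2) = b ^ (q+1) * b := pow_succ _ _
      have hps2 : a ^ (q+1) = a ^ q * a := pow_succ _ _
      have hb1 : (1:ℝ) < b := by
        rw [hbdef]
        have : (0:ℝ) < 1/(x+1) := by positivity
        linarith
      have hxa : x * a * (b - 1) = 1 := by rw [hadef, hbdef]; field_simp; ring
      have h6 : x * a ^ (q+1) * (b - 1) = a ^ q := by
        rw [hps2]; linear_combination (a ^ q) * hxa
      have h7 : (x * a ^ (q+1)) * b ≤ ((x+1) * b ^ (q+1)) * b :=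
        mul_le_mul_of_nonneg_right hL1 (by linarith)
      have h8 : (x * a ^ (q+1)) * b = x * a ^ (q+1) + a ^ q := by
        rw [← h6]; ring
      have h9 : ((x+1) * b ^ (q+1)) * b = (x+1) * b ^ (q+2) := by rw [hps]; ring
      linarith [h7, h8, hL2, h9]
    · interval_cases q
      · norm_num [hxdef]
      · norm_num [hxdef]
  have hB : (0:ℝ) < (1 + 1/(x+1)) ^ (q+2) := by positivity
  have eL : ((1 + 1/(x+1)) ^ (q+2))⁻¹ *
      ((1 + 1/x) ^ (q+1) / ((1 + 1/x) - 1) + 1 + (1 + 1/(x+1))) * ((1 + 1/(x+1)) - 1)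
      = (x * (1 + 1/x) ^ (q+1) + 1 + (1 + 1/(x+1))) / ((x+1) * (1 + 1/(x+1)) ^ (q+2)) := by
    field_simp
    ring
  rw [eL, div_le_one (by positivity)]
  linarith [key]
end
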